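/- arXiv:1402.3808 — 2 statements merged into one kernel-verified Lean document; each statement's English description precedes it below -/
import Mathlib

section
/- Let R be a Noetherian integral domain and M a finitely generated R-module. Then M is locally free of constant rank in a neighborhood of a prime p (i.e., M_p is free over R_p) if and only if the function q ↦ dim_{κ(q)} M ⊗ κ(q) is locally constant at p on Spec R. -/
/-!
If `M_p` is free, `p` lies in the open free locus of `M`, on which the fiber rank agrees with
the locally constant rank of the stalks. Conversely, every open neighbourhood of `p` contains
the generic point, so the fiber rank at `p` equals the generic rank `dim_K (K ⊗ M)`. Lifting a
basis of `κ(p) ⊗ M_p` gives, by Nakayama, a surjection `R_pⁿ → M_p`; tensored with `K` it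
becomes a surjection between `K`-vector spaces of the same dimension, hence injective, and
since `R_pⁿ` embeds into `K ⊗ R_pⁿ` it was injective to begin with.
-/

open TensorProduct IsLocalRing Module Topology

theorem TensorProduct.mk_one_injective_of_flat {A B F : Type*} [CommRing A] [CommRing B]
    [Algebra A B] [AddCommGroup F] [Module A F] [Module.Flat A F]
    (hB : Function.Injective (algebraMap A B)) :
    Function.Injective (TensorProduct.mk A B F 1) := by
  convert Module.Flat.rTensor_preserves_injective_linearMap (Algebra.linearMap A B) hB |>.comp
    (TensorProduct.lid A F).symm.injective
  funext x
  simp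

theorem finrank_tensorProduct_eq_of_algEquiv {R K₁ K₂ : Type*} [CommRing R] [CommRing K₁]
    [CommRing K₂] [Algebra R K₁] [Algebra R K₂] (e : K₁ ≃ₐ[R] K₂)
    (M : Type*) [AddCommGroup M] [Module R M] :
    finrank K₁ (K₁ ⊗[R] M) = finrank K₂ (K₂ ⊗[R] M) := by
  let j : K₁ ⊗[R] M ≃+ K₂ ⊗[R] M := (e.toLinearEquiv.rTensor M).toAddEquiv
  have hj (a : K₁) (x : K₁ ⊗[R] M) : j (a • x) = e a • j x := by
    induction x using TensorProduct.induction_on <;> simp_all [j, smul_add, smul_tmul']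
  have := congrArg Cardinal.toNat (lift_rank_eq_of_equiv_equiv e j e.bijective hj)
  rwa [Cardinal.toNat_lift, Cardinal.toNat_lift] at this

section LocalRing

variable {A N : Type*} [CommRing A] [IsLocalRing A] [AddCommGroup N] [Module A N]
  [Module.Finite A N]

theorem IsLocalRing.exists_linearCombination_surjective :
    ∃ f : Fin (finrank (ResidueField A) (ResidueField A ⊗[A] N)) → N,
      Function.Surjective (Fintype.linearCombination A f) := by
  let b := Module.finBasis (ResidueField A) (ResidueField A ⊗[A] N)
  choose f hf using fun i ↦ TensorProduct.mk_surjective A N _ residue_surjective (b i)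
  refine ⟨f, ?_⟩
  rw [← LinearMap.range_eq_top, Fintype.range_linearCombination]
  exact span_eq_top_of_tmul_eq_basis f b hf

theorem IsLocalRing.free_of_finrank_residueField_tensor_eq {K : Type*} [Field K] [Algebra A K]
    (hK : Function.Injective (algebraMap A K))
    (h : finrank (ResidueField A) (ResidueField A ⊗[A] N) = finrank K (K ⊗[A] N)) :
    Module.Free A N := by
  obtain ⟨f, hf⟩ := exists_linearCombination_surjective (A := A) (N := N)
  let φ := Fintype.linearCombination A f
  have hφK : Function.Injective (φ.baseChange K) := by
    refine (LinearMap.injective_iff_surjective_of_finrank_eq_finrank ?_).mpr ?_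
    · rw [finrank_baseChange, finrank_fin_fun, h]
    · rw [LinearMap.baseChange_eq_ltensor]
      exact LinearMap.lTensor_surjective K hf
  have hφ : Function.Injective φ := fun x y hxy ↦
    TensorProduct.mk_one_injective_of_flat hK (hφK (by simp [hxy]))
  exact .of_equiv (LinearEquiv.ofBijective φ ⟨hφ, hf⟩)

end LocalRing

section FiberRank

variable {R M : Type*} [CommRing R] [AddCommGroup M] [Module R M]

theorem finrank_fiber_eq_rankAtStalk {q : PrimeSpectrum R} (hq : q ∈ freeLocus R M) :
    finrank (ResidueField (Localization.AtPrime q.asIdeal))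
        (ResidueField (Localization.AtPrime q.asIdeal) ⊗[R] M) = rankAtStalk M q := by
  have := (mem_freeLocus_iff_tensor q (Localization.AtPrime q.asIdeal)).mp hq
  rw [rankAtStalk_eq_finrank_tensorProduct, ← (AlgebraTensorModule.cancelBaseChange R
    (Localization.AtPrime q.asIdeal) _ _ M).finrank_eq, finrank_baseChange]

theorem eventually_finrank_fiber_eq_of_mem_freeLocus [Module.FinitePresentation R M]
    {p : PrimeSpectrum R} (hp : p ∈ freeLocus R M) :
    ∀ᶠ q in 𝓝 p, finrank (ResidueField (Localization.AtPrime q.asIdeal))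
        (ResidueField (Localization.AtPrime q.asIdeal) ⊗[R] M) =
      finrank (ResidueField (Localization.AtPrime p.asIdeal))
        (ResidueField (Localization.AtPrime p.asIdeal) ⊗[R] M) := by
  have hconst := (isLocallyConstant_rankAtStalk_freeLocus (M := M)).eventually_eq ⟨p, hp⟩
  refine (isOpen_freeLocus.isOpenEmbedding_subtypeVal.map_nhds_eq ⟨p, hp⟩).ge
    (Filter.eventually_map.mpr (hconst.mono fun q hq ↦ ?_))
  rw [finrank_fiber_eq_rankAtStalk q.2, finrank_fiber_eq_rankAtStalk hp]
  exact hq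

theorem free_localization_of_finrank_fiber_eq_generic [IsDomain R] [Module.Finite R M]
    (p : PrimeSpectrum R)
    (h : finrank (ResidueField (Localization.AtPrime p.asIdeal))
        (ResidueField (Localization.AtPrime p.asIdeal) ⊗[R] M) =
      finrank (ResidueField (Localization.AtPrime (⊥ : Ideal R)))
        (ResidueField (Localization.AtPrime (⊥ : Ideal R)) ⊗[R] M)) :
    Module.Free (Localization.AtPrime p.asIdeal) (LocalizedModule p.asIdeal.primeCompl M) := by
  let Rp := Localization.AtPrime p.asIdeal
  let K := FractionRing R
  change p ∈ freeLocus R M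
  rw [mem_freeLocus_iff_tensor p Rp]
  refine free_of_finrank_residueField_tensor_eq (IsFractionRing.injective Rp K) ?_
  rw [(AlgebraTensorModule.cancelBaseChange R Rp _ _ M).finrank_eq,
    (AlgebraTensorModule.cancelBaseChange R Rp K K M).finrank_eq, h]
  exact finrank_tensorProduct_eq_of_algEquiv (FractionRing.algEquiv R _).symm M

end FiberRank

/-- A finitely generated module over a Noetherian integral domain is locally free at a prime
`p` (i.e. `M_p` is free over `R_p`) if and only if the fiber-dimension function
`q ↦ dim_{κ(q)} (M ⊗ κ(q))` is locally constant at `p` on `Spec R`. -/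
theorem free_localization_iff_fiber_rank_locally_constant
    (R : Type*) [CommRing R] [IsDomain R] [IsNoetherianRing R]
    (M : Type*) [AddCommGroup M] [Module R M] [Module.Finite R M]
    (p : PrimeSpectrum R) :
    Module.Free (Localization.AtPrime p.asIdeal)
        (LocalizedModule p.asIdeal.primeCompl M) ↔
      ∃ U : Set (PrimeSpectrum R), IsOpen U ∧ p ∈ U ∧ ∀ q ∈ U,
        Module.finrank (IsLocalRing.ResidueField (Localization.AtPrime q.asIdeal))
            (IsLocalRing.ResidueField (Localization.AtPrime q.asIdeal) ⊗[R] M) =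
          Module.finrank (IsLocalRing.ResidueField (Localization.AtPrime p.asIdeal))
            (IsLocalRing.ResidueField (Localization.AtPrime p.asIdeal) ⊗[R] M) := by
  have := Module.finitePresentation_of_finite R M
  constructor
  · intro hp
    obtain ⟨U, hU, hUo, hpU⟩ :=
      eventually_nhds_iff.mp (eventually_finrank_fiber_eq_of_mem_freeLocus hp)
    exact ⟨U, hUo, hpU, hU⟩
  · rintro ⟨U, hU, hpU, hconst⟩
    have hgeneric : ⊥ ∈ U :=
      ((PrimeSpectrum.le_iff_specializes ⊥ p).mp bot_le).mem_open hU hpU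
    exact free_localization_of_finrank_fiber_eq_generic p (hconst ⊥ hgeneric).symm
end

section
/- Let M be a finitely generated module over a Noetherian commutative ring R. The map q ↦ dim_{κ(q)} M ⊗ κ(q) on Spec R is upper semicontinuous. -/
/-!
Lift a `κ(q)`-basis of `κ(q) ⊗ M` to elements `g₁, …, gₙ` of `M`. The quotient `M ⧸ (g)` then has
zero fiber at `q`, so by Nakayama `q` lies outside its support, which is closed since `M` is
finite. At every prime `p` off that support the fiber of `M ⧸ (g)` vanishes as well, and by right
exactness of `κ(p) ⊗ -` the `1 ⊗ gᵢ` span `κ(p) ⊗ M`, so its dimension is at most `n`.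
-/

open TensorProduct Module

section

variable {R M : Type*} [CommRing R] [AddCommGroup M] [Module R M]

theorem Submodule.baseChange_eq_top_iff_subsingleton_tensor_quotient (A : Type*) [CommRing A]
    [Algebra R A] (N : Submodule R M) :
    N.baseChange A = ⊤ ↔ Subsingleton (A ⊗[R] (M ⧸ N)) := by
  have hexact := lTensor_exact A (LinearMap.exact_subtype_mkQ N) N.mkQ_surjective
  have hsurj := LinearMap.lTensor_surjective A N.mkQ_surjective
  rw [subsingleton_iff_forall_eq 0, hsurj.forall, eq_top_iff']
  refine forall_congr' fun x => ?_
  rw [hexact x]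
  rfl

theorem Module.notMem_support_quotient_iff_baseChange_eq_top [Module.Finite R M]
    (N : Submodule R M) (p : PrimeSpectrum R) :
    p ∉ Module.support R (M ⧸ N) ↔ N.baseChange p.asIdeal.ResidueField = ⊤ := by
  rw [Module.mem_support_iff_nontrivial_residueField_tensorProduct, not_nontrivial_iff_subsingleton,
    Submodule.baseChange_eq_top_iff_subsingleton_tensor_quotient]

theorem finrank_le_card_of_baseChange_span_eq_top (K : Type*) [Field K] [Algebra R K]
    {ι : Type*} [Fintype ι] (g : ι → M) (hg : (Submodule.span R (Set.range g)).baseChange K = ⊤) :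
    finrank K (K ⊗[R] M) ≤ Fintype.card ι := by
  rw [Submodule.baseChange_span, ← Set.range_comp] at hg
  rw [← finrank_top, ← hg]
  exact finrank_range_le_card _

theorem exists_fin_finrank_baseChange_span_eq_top (K : Type*) [Field K] [Algebra R K]
    [Module.Finite K (K ⊗[R] M)] :
    ∃ g : Fin (finrank K (K ⊗[R] M)) → M, (Submodule.span R (Set.range g)).baseChange K = ⊤ := by
  obtain ⟨κ, a, -, hspan, hli⟩ := exists_linearIndependent' K (TensorProduct.mk R K M 1)
  have hspan_top : Submodule.span K (Set.range (TensorProduct.mk R K M 1)) = ⊤ := by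
    rw [← Set.image_univ, ← Submodule.baseChange_span, Submodule.span_univ,
      Submodule.baseChange_top]
  let b : Basis κ K (K ⊗[R] M) := Basis.mk hli (by rw [hspan, hspan_top])
  refine ⟨a ∘ (finBasis K (K ⊗[R] M)).indexEquiv b, ?_⟩
  rw [EquivLike.range_comp, Submodule.baseChange_span, ← Set.range_comp, hspan, hspan_top]

end

theorem fiber_rank_upperSemicontinuous_general
    (R : Type*) [CommRing R]
    (M : Type*) [AddCommGroup M] [Module R M] [Module.Finite R M] :
    UpperSemicontinuous (fun q : PrimeSpectrum R =>
      Module.finrank (IsLocalRing.ResidueField (Localization.AtPrime q.asIdeal))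
        (IsLocalRing.ResidueField (Localization.AtPrime q.asIdeal) ⊗[R] M)) := by
  intro q n hn
  obtain ⟨g, hg⟩ := exists_fin_finrank_baseChange_span_eq_top (R := R) (M := M)
    q.asIdeal.ResidueField
  have hq : q ∉ Module.support R (M ⧸ Submodule.span R (Set.range g)) :=
    (Module.notMem_support_quotient_iff_baseChange_eq_top _ q).mpr hg
  filter_upwards [Module.isClosed_support.isOpen_compl.mem_nhds hq] with p hp
  calc _ ≤ Fintype.card (Fin _) := finrank_le_card_of_baseChange_span_eq_top _ g
          ((Module.notMem_support_quotient_iff_baseChange_eq_top _ p).mp hp)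
    _ < n := by rwa [Fintype.card_fin]

/-- The fiber-dimension function `q ↦ dim_{κ(q)} (M ⊗ κ(q))` of a finitely generated module
over a Noetherian commutative ring is upper semicontinuous on `Spec R`. -/
theorem fiber_rank_upperSemicontinuous
    (R : Type*) [CommRing R] [IsNoetherianRing R]
    (M : Type*) [AddCommGroup M] [Module R M] [Module.Finite R M] :
    UpperSemicontinuous (fun q : PrimeSpectrum R =>
      Module.finrank (IsLocalRing.ResidueField (Localization.AtPrime q.asIdeal))
        (IsLocalRing.ResidueField (Localization.AtPrime q.asIdeal) ⊗[R] M)) :=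
  fiber_rank_upperSemicontinuous_general R M
end
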